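/- arXiv:math/0404540 — 2 statements merged into one kernel-verified Lean document; each statement's English description precedes it below -/
import Mathlib

section
/- Define numbers n_{k;d} for 0 ≤ k ≤ r−1 and d ≥ −1 by the generating function ∑_{d≥−1} n_{k;d} z^d = e^{−kz}/(1 − e^{−rz}). Then n_{k;−1} = 1/r for all k, and the coefficients satisfy the inversion property: if H_k(z) = ∑_{i=0}^{r−1} e^{a(k,i)z} E^{(i)}(z) with a(k,i) = k−r for i < k and a(k,i) = k for i ≥ k, then E^{(k)}(z) = (1/(1 − e^{−rz}))·(e^{−kz} H_k(z) − e^{−(k+1)z} H_{k+1}(z)), where H_r := H₀, for any collection of commuting formal series E^{(0)}(z),…,E^{(r−1)}(z). -/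
/-!
Multiplying the `k`-th equation by `e^{-kz}` turns every exponent into `0` or `-r`:
`e^{-kz} H_k = ∑_i c_{k,i} E^{(i)}` with `c_{k,i} = e^{-rz}` for `i < k` and `1` otherwise, and
this also holds for `k = r` because `H_r = H_0 = ∑_i E^{(i)}`. The coefficient vectors for `k`
and `k + 1` differ only in position `k`, where they are `1` and `e^{-rz}`, so the difference of
the two twisted equations isolates `(1 - e^{-rz}) E^{(k)}`. For the residue, `1 - e^{-rz}`
starts with `r z`, so comparing the coefficients of `z` in `z e^{-kz} = (1 - e^{-rz}) N`
gives `r · N(0) = 1`.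
-/

open PowerSeries Finset

lemma sum_ite_lt_mul_sub_sum_ite_lt_succ_mul {R : Type*} [Ring R] (g : R) (E : ℕ → R)
    {k r : ℕ} (hk : k < r) :
    ∑ i ∈ range r, (if i < k then g else 1) * E i
        - ∑ i ∈ range r, (if i < k + 1 then g else 1) * E i = (1 - g) * E k := by
  rw [← sum_sub_distrib]
  have hterm : ∀ i ∈ range r, (if i < k then g else 1) * E i
      - (if i < k + 1 then g else 1) * E i = if k = i then (1 - g) * E k else 0 := by
    intro i _
    rcases lt_trichotomy i k with h | rfl | h
    · simp [h, h.ne', Nat.lt_succ_of_lt h]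
    · simp [sub_mul]
    · simp [h.ne, h.not_gt, Nat.not_lt.mpr h]
  rw [sum_congr rfl hterm, sum_ite_eq, if_pos (mem_range.mpr hk)]

lemma eq_algebraMap_one_div_of_natCast_mul_eq_one {A : Type*} [Ring A] [Algebra ℚ A]
    {n : ℕ} (hn : n ≠ 0) {x : A} (h : (n : A) * x = 1) : x = algebraMap ℚ A (1 / n) :=
  calc x = algebraMap ℚ A (1 / n) * ((n : A) * x) := by
        rw [← mul_assoc, ← map_natCast (algebraMap ℚ A), ← map_mul,
          one_div_mul_cancel (Nat.cast_ne_zero.mpr hn), map_one, one_mul]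
    _ = algebraMap ℚ A (1 / n) := by rw [h, mul_one]

namespace PowerSeries

variable {A : Type*} [CommRing A] [Algebra ℚ A]

@[simp]
lemma constantCoeff_rescale_exp (c : A) : constantCoeff (rescale c (exp A)) = 1 := by
  simp [← coeff_zero_eq_constantCoeff, coeff_rescale]

lemma rescale_zero_exp : rescale (0 : A) (exp A) = 1 := by
  simp

lemma rescale_intCast_exp_mul (a b : ℤ) :
    rescale (a : A) (exp A) * rescale (b : A) (exp A) = rescale ((a + b : ℤ) : A) (exp A) := by
  rw [exp_mul_exp_eq_exp_add, Int.cast_add]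

lemma neg_mul_constantCoeff_eq_of_X_mul_eq_one_sub_rescale_exp_mul {c : A} {f N : A⟦X⟧}
    (h : X * f = (1 - rescale c (exp A)) * N) : -c * constantCoeff N = constantCoeff f := by
  simpa [coeff_one_mul] using (congrArg (coeff 1) h).symm

lemma rescale_exp_neg_natCast_mul_eq_sum {r : ℕ} (hr : 0 < r) {E H : ℕ → A⟦X⟧}
    (hH : ∀ k < r, H k = ∑ i ∈ range r,
      rescale ((if i < k then (k : ℤ) - r else k : ℤ) : A) (exp A) * E i)
    (hHr : H r = H 0) {m : ℕ} (hm : m ≤ r) :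
    rescale ((-m : ℤ) : A) (exp A) * H m = ∑ i ∈ range r,
      (if i < m then rescale ((-r : ℤ) : A) (exp A) else 1) * E i := by
  have hHm : H m = ∑ i ∈ range r,
      rescale ((if i < m then (m : ℤ) - r else m : ℤ) : A) (exp A) * E i := by
    rcases hm.lt_or_eq with hm | rfl
    · exact hH m hm
    · rw [hHr, hH 0 hr]
      refine sum_congr rfl fun i hi => ?_
      simp [mem_range.mp hi]
  rw [hHm, mul_sum]
  refine sum_congr rfl fun i _ => ?_
  rw [← mul_assoc, rescale_intCast_exp_mul]
  split_ifs
  · rw [← add_sub_assoc, neg_add_cancel, zero_sub]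
  · rw [neg_add_cancel, Int.cast_zero, rescale_zero_exp]

end PowerSeries

/-- Define `n_{k;d}` (`d ≥ −1`) by
`∑_{d≥−1} n_{k;d} z^d = e^{−kz}/(1 − e^{−rz})`, i.e. by
`z·e^{−kz} = (1 − e^{−rz})·N_k(z)` with `N_k(z) = ∑_{d≥−1} n_{k;d} z^{d+1}`; then
`n_{k;−1} = 1/r`.  Moreover the system `H_k(z) = ∑_i e^{a(k,i)z} E^{(i)}(z)` with
`a(k,i) = k−r` for `i < k` and `a(k,i) = k` for `i ≥ k`, `H_r := H_0`, inverts to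
`(1 − e^{−rz}) E^{(k)}(z) = e^{−kz} H_k(z) − e^{−(k+1)z} H_{k+1}(z)`, for any collection
of (commuting) formal series `E^{(0)},…,E^{(r−1)}`. -/
theorem stmt_12 (r : ℕ) (hr : 0 < r) (A : Type*) [CommRing A] [Algebra ℚ A]
    (E H : ℕ → PowerSeries A)
    (a : ℕ → ℕ → ℤ) (ha : ∀ k i, a k i = if i < k then (k : ℤ) - r else (k : ℤ))
    (hH : ∀ k, k < r →
      H k = ∑ i ∈ Finset.range r, rescale ((a k i : ℤ) : A) (exp A) * E i)
    (hHr : H r = H 0) :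
    (∀ (k : ℕ) (N : PowerSeries A), k < r →
      PowerSeries.X * rescale ((-(k : ℤ) : ℤ) : A) (exp A)
          = (1 - rescale ((-(r : ℤ) : ℤ) : A) (exp A)) * N →
      PowerSeries.constantCoeff N = algebraMap ℚ A (1 / r)) ∧
    (∀ k, k < r →
      (1 - rescale ((-(r : ℤ) : ℤ) : A) (exp A)) * E k
        = rescale ((-(k : ℤ) : ℤ) : A) (exp A) * H k
          - rescale ((-((k : ℤ) + 1) : ℤ) : A) (exp A) * H (k + 1)) := by
  refine ⟨fun k N _ hN => ?_, fun k hk => ?_⟩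
  · refine eq_algebraMap_one_div_of_natCast_mul_eq_one hr.ne' ?_
    simpa using neg_mul_constantCoeff_eq_of_X_mul_eq_one_sub_rescale_exp_mul hN
  · have hH' : ∀ m < r, H m = ∑ i ∈ range r,
        rescale ((if i < m then (m : ℤ) - r else m : ℤ) : A) (exp A) * E i := by
      intro m hm
      simp only [hH m hm, ha]
    rw [show -((k : ℤ) + 1) = -((k + 1 : ℕ) : ℤ) by push_cast; rfl,
      rescale_exp_neg_natCast_mul_eq_sum hr hH' hHr hk.le,
      rescale_exp_neg_natCast_mul_eq_sum hr hH' hHr hk,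
      sum_ite_lt_mul_sub_sum_ite_lt_succ_mul _ _ hk]
end

section
/- Conjugation of the diagonal fermionic operator ℰ(z) = (1/ς(rz)) ∑_{m∈ℤ+1/2} e^{mrz} E_{m,m} by the d-th power of the shift (translation) operator S on the fermionic Fock space satisfies S^{−d} ℰ(z) S^{d} = e^{drz} ℰ(z) + ((e^{drz} − 1)/ς(rz)²) · Id, for every d ∈ ℤ. -/
/-! Write `E(p) = ∑ₘ e^{(m+1/2)x} c(p, m)` (with `x = rz`) for `ς(x)` times the eigenvalue of `ℰ(z)`
in charge `p`. Raising the charge by one shifts the occupation numbers,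
`c(p+1, m) = c(p, m-1) + [m = 0]`, so `E(p+1) = eˣ E(p) + e^{x/2}`. As `e^{x/2} ς(x) = eˣ - 1`,
this says that `ς⁻¹ E(p) + ς⁻²` is multiplied by `eˣ`, hence by `e^{dx}` when the charge moves
by `d`. The same recursion carries finite support of `c(q, ·)` to every charge, so all sums are
finite. -/

open scoped Classical

open Function

noncomputable def varsigma (x : ℝ) : ℝ := Real.exp (x / 2) - Real.exp (-x / 2)

lemma exp_half_mul_varsigma (x : ℝ) : Real.exp (x / 2) * varsigma x = Real.exp x - 1 := by
  rw [varsigma, mul_sub, ← Real.exp_add, ← Real.exp_add, add_halves, ← add_div, add_neg_cancel,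
    zero_div, Real.exp_zero]

noncomputable def expSum (x : ℝ) (a : ℤ → ℝ) : ℝ := ∑ᶠ m : ℤ, Real.exp ((m + 1 / 2) * x) * a m

lemma sum_eq_expSum (x : ℝ) {a : ℤ → ℝ} {M : Finset ℤ} (h : support a ⊆ M) :
    ∑ m ∈ M, Real.exp ((m + 1 / 2) * x) * a m = expSum x a :=
  (finsum_eq_finsetSum_of_support_subset _ ((support_mul_subset_right _ _).trans h)).symm

lemma eq_exp_mul_of_forall_succ {x : ℝ} {G : ℤ → ℝ} (h : ∀ p, G (p + 1) = Real.exp x * G p)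
    (p d : ℤ) : G (p + d) = Real.exp (d * x) * G p := by
  induction d using Int.induction_on with
  | zero => simp
  | succ n ih =>
    rw [← add_assoc, h, ih, ← mul_assoc, ← Real.exp_add]
    push_cast; ring_nf
  | pred n ih =>
    have hG := h (p + (-n - 1))
    rw [show p + (-n - 1) + 1 = p + -n by ring, ih] at hG
    have hexp : Real.exp x * Real.exp (((-n - 1 : ℤ) : ℝ) * x) = Real.exp ((-n : ℤ) * x) := by
      rw [← Real.exp_add]; push_cast; ring_nf
    apply mul_left_cancel₀ (Real.exp_ne_zero x)
    rw [← hG, ← mul_assoc, hexp]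

lemma hasFiniteSupport_ite_eq {α M : Type*} [DecidableEq α] [Zero M] (a : α) (b : M) :
    HasFiniteSupport fun x => if x = a then b else 0 :=
  (Set.finite_singleton a).subset fun _ hx => by_contra fun hxa => hx (if_neg hxa)

section ChargeShift

variable {c : ℤ → ℤ → ℝ} (hstep : ∀ p m, c (p + 1) m = c p (m - 1) + if m = 0 then 1 else 0)
include hstep

lemma hasFiniteSupport_succ_iff (p : ℤ) :
    (c (p + 1)).HasFiniteSupport ↔ (c p).HasFiniteSupport := by
  have hδ := hasFiniteSupport_ite_eq (0 : ℤ) (1 : ℝ)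
  constructor
  · intro h
    have hc : c p = fun m => c (p + 1) (m + 1) - if m + 1 = 0 then 1 else 0 := by
      ext m; simp [hstep]
    rw [hc]
    exact (h.fun_comp_of_injective (add_left_injective 1)).sub
      (hδ.fun_comp_of_injective (add_left_injective 1))
  · intro h
    rw [show c (p + 1) = _ from funext (hstep p)]
    exact (h.fun_comp_of_injective (sub_left_injective (b := 1))).add hδ

lemma hasFiniteSupport_charge {q : ℤ} (hq : (c q).HasFiniteSupport) (p : ℤ) :
    (c p).HasFiniteSupport := by
  induction p using Int.inductionOn' (b := q) with
  | zero => exact hq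
  | succ k _ ih => exact (hasFiniteSupport_succ_iff hstep k).2 ih
  | pred k _ ih => exact (hasFiniteSupport_succ_iff hstep (k - 1)).1 (by rwa [sub_add_cancel])

lemma expSum_succ (x : ℝ) {p : ℤ} (hp : (c p).HasFiniteSupport) :
    expSum x (c (p + 1)) = Real.exp x * expSum x (c p) + Real.exp (x / 2) := by
  have hshift : ∑ᶠ m : ℤ, Real.exp ((m + 1 / 2) * x) * c p (m - 1)
      = Real.exp x * expSum x (c p) := by
    rw [expSum, mul_finsum, ← finsum_comp_equiv (Equiv.addRight (1 : ℤ))]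
    refine finsum_congr fun m => ?_
    simp only [Equiv.coe_addRight, Int.cast_add, Int.cast_one, add_sub_cancel_right]
    rw [← mul_assoc, ← Real.exp_add]
    ring_nf
  have hdelta : ∑ᶠ m : ℤ, Real.exp ((m + 1 / 2) * x) * (if m = 0 then 1 else 0)
      = Real.exp (x / 2) := by
    rw [finsum_eq_single _ 0 fun m hm => by simp [hm]]
    simp only [Int.cast_zero, zero_add, if_true, mul_one]
    ring_nf
  rw [expSum]
  simp only [hstep, mul_add]
  rw [finsum_add_distrib, hshift, hdelta]
  · exact HasFiniteSupport.mul_right _ (hp.fun_comp_of_injective (sub_left_injective (b := 1)))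
  · exact HasFiniteSupport.mul_right _ (hasFiniteSupport_ite_eq (0 : ℤ) 1)

lemma varsigma_inv_mul_expSum_add_sq_charge_add (hfin : ∀ p, (c p).HasFiniteSupport) (x : ℝ)
    (p d : ℤ) :
    (varsigma x)⁻¹ * expSum x (c (p + d)) + (varsigma x)⁻¹ ^ 2
      = Real.exp (d * x) * ((varsigma x)⁻¹ * expSum x (c p) + (varsigma x)⁻¹ ^ 2) := by
  refine eq_exp_mul_of_forall_succ
    (G := fun p => (varsigma x)⁻¹ * expSum x (c p) + (varsigma x)⁻¹ ^ 2) (fun p => ?_) p d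
  rw [expSum_succ hstep x (hfin p)]
  rcases eq_or_ne (varsigma x) 0 with h | h
  · simp [h]
  · field_simp
    linear_combination exp_half_mul_varsigma x

end ChargeShift

/-- The normal-ordered eigenvalue of `E_{m+1/2, m+1/2}` on the basis vector of the partition
`l 0 ≥ l 1 ≥ ⋯` in charge `p`. -/
noncomputable def occupation (l : ℕ → ℕ) (p m : ℤ) : ℝ :=
  (if ∃ j : ℕ, (l j : ℤ) - (j : ℤ) - 1 + p = m then (1 : ℝ) else 0) - (if m < 0 then 1 else 0)

lemma occupation_succ (l : ℕ → ℕ) (p m : ℤ) :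
    occupation l (p + 1) m = occupation l p (m - 1) + if m = 0 then 1 else 0 := by
  have hshift : (∃ j : ℕ, (l j : ℤ) - j - 1 + (p + 1) = m) ↔
      ∃ j : ℕ, (l j : ℤ) - j - 1 + p = m - 1 :=
    exists_congr fun j => by omega
  rw [occupation, occupation, if_congr hshift rfl rfl]
  rcases lt_trichotomy m 0 with hm | rfl | hm
  · simp [hm, hm.ne, show m - 1 < 0 by omega]
  · norm_num
  · simp [hm.ne', not_lt.2 hm.le, show ¬ m - 1 < 0 by omega]

theorem stmt_14_general (r : ℕ) (l : ℕ → ℕ)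
    (z : ℝ) (q d : ℤ)
    (c : ℤ → ℤ → ℝ)
    (hc : ∀ (p m : ℤ), c p m =
      (if ∃ j : ℕ, (l j : ℤ) - (j : ℤ) - 1 + p = m then (1 : ℝ) else 0)
        - (if m < 0 then 1 else 0))
    (M : Finset ℤ) (hM : ∀ m, c q m ≠ 0 ∨ c (q + d) m ≠ 0 → m ∈ M) :
    (Real.exp (r * z / 2) - Real.exp (-(r * z) / 2))⁻¹ *
        ∑ m ∈ M, Real.exp (((m : ℝ) + 1 / 2) * (r * z)) * c (q + d) m
      = Real.exp ((d : ℝ) * (r * z)) *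
          ((Real.exp (r * z / 2) - Real.exp (-(r * z) / 2))⁻¹ *
            ∑ m ∈ M, Real.exp (((m : ℝ) + 1 / 2) * (r * z)) * c q m)
        + (Real.exp ((d : ℝ) * (r * z)) - 1) *
            ((Real.exp (r * z / 2) - Real.exp (-(r * z) / 2))⁻¹) ^ 2 := by
  obtain rfl : c = occupation l := funext fun p => funext (hc p)
  have hfin := hasFiniteSupport_charge (occupation_succ l)
    (M.finite_toSet.subset fun m hm => hM m (.inl hm))
  rw [sum_eq_expSum _ fun m hm => hM m (.inl hm), sum_eq_expSum _ fun m hm => hM m (.inr hm)]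
  have key := varsigma_inv_mul_expSum_add_sq_charge_add (occupation_succ l) hfin (r * z) q d
  rw [varsigma] at key
  linear_combination key

/-- `S^{−d} ℰ(z) S^{d} = e^{drz} ℰ(z) + ((e^{drz} − 1)/ς(rz)²)·Id` for the
diagonal fermionic operator `ℰ(z) = (1/ς(rz)) ∑_{m∈ℤ+1/2} e^{mrz} E_{m,m}` and the
charge-shift operator `S`.  Both sides are diagonal on the basis vectors, indexed by a
partition `λ` (written `l 0 ≥ l 1 ≥ ⋯`, vanishing from `L` on) and a charge `q ∈ ℤ`;
the normal-ordered eigenvalue of `E_{m'+1/2,m'+1/2}` in charge `q` is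
`c q m' = [m' ∈ {λ_j − j + q : j ≥ 1}] − [m' < 0]` (finitely supported).  The operator
identity says precisely that for every `λ`, `q`, `d` the eigenvalue of `ℰ(z)` in charge
`q + d` equals `e^{drz}` times the one in charge `q` plus `(e^{drz} − 1)/ς(rz)²`
(stated for real `z > 0`, where all regularized sums converge). -/
theorem stmt_14 (r : ℕ) (hr : 0 < r) (l : ℕ → ℕ) (L : ℕ)
    (hl : Antitone l) (hL : ∀ j, L ≤ j → l j = 0)
    (z : ℝ) (hz : 0 < z) (q d : ℤ)
    (c : ℤ → ℤ → ℝ)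
    (hc : ∀ (p m : ℤ), c p m =
      (if ∃ j : ℕ, (l j : ℤ) - (j : ℤ) - 1 + p = m then (1 : ℝ) else 0)
        - (if m < 0 then 1 else 0))
    (M : Finset ℤ) (hM : ∀ m, c q m ≠ 0 ∨ c (q + d) m ≠ 0 → m ∈ M) :
    (Real.exp (r * z / 2) - Real.exp (-(r * z) / 2))⁻¹ *
        ∑ m ∈ M, Real.exp (((m : ℝ) + 1 / 2) * (r * z)) * c (q + d) m
      = Real.exp ((d : ℝ) * (r * z)) *
          ((Real.exp (r * z / 2) - Real.exp (-(r * z) / 2))⁻¹ *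
            ∑ m ∈ M, Real.exp (((m : ℝ) + 1 / 2) * (r * z)) * c q m)
        + (Real.exp ((d : ℝ) * (r * z)) - 1) *
            ((Real.exp (r * z / 2) - Real.exp (-(r * z) / 2))⁻¹) ^ 2 :=
  stmt_14_general r l z q d c hc M hM
end
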